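/- arXiv:2505.11302 — 4 statements merged into one kernel-verified Lean document; each statement's English description precedes it below -/
import Mathlib

section
/- Let B be a balanced parenthesis sequence, let i be a position with B[i] = '(', and let c = find_close(B,i). If j is any position with j + (c - i) ≤ |B| such that the substring B[j..j+(c-i)] is equal to B[i..c], then B[j] = '(' and find_close(B,j) = j + (c - i). (Hence the parenthesis segment generated by the subtree starting at position j is exactly B[j..j+(c-i)], and the two subtrees are identical.) -/
/-- A balanced parenthesis sequence over the alphabet {'(',')'}, encoded as
`List Bool` with `true` = '(' and `false` = ')'. -/
def isBalanced (B : List Bool) : Prop :=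
  B.count true = B.count false ∧
  ∀ p : ℕ, (B.take p).count false ≤ (B.take p).count true

/-- The (1-based) substring `B[i..c]`, from position `i` to position `c` inclusive. -/
def seg (B : List Bool) (i c : ℕ) : List Bool :=
  (B.drop (i - 1)).take (c - i + 1)

/-- `c` is a position with `i < c ≤ |B|` such that `B[i..c]` contains
equally many '(' and ')'. -/
def matchAt (B : List Bool) (i c : ℕ) : Prop :=
  i < c ∧ c ≤ B.length ∧ (seg B i c).count true = (seg B i c).count false

/-- `c = find_close(B,i)`: the smallest `c > i` such that `B[i..c]` contains
equally many '(' and ')'. -/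
def isFindClose (B : List Bool) (i c : ℕ) : Prop :=
  matchAt B i c ∧ ∀ c', matchAt B i c' → c ≤ c'

/-!
Both `B[i]` and the value of `find_close` are read off the segment `B[i..c]` alone: every
candidate `c' < c` for `find_close(B,j)` cuts out a prefix of `B[j..j+(c-i)] = B[i..c]`, which
would equally be a match for `i` before `c`.
-/

lemma seg_getElem?_zero (B : List Bool) (a b : ℕ) : (seg B a b)[0]? = B[a - 1]? := by
  simp [seg, List.getElem?_drop]

lemma seg_eq_take_seg (B : List Bool) {a b b' : ℕ} (hb : b' ≤ b) :
    seg B a b' = (seg B a b).take (b' - a + 1) := by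
  simp only [seg, List.take_take]
  congr 1
  omega

lemma isFindClose_of_seg_eq {B B' : List Bool} {i j d : ℕ} (hc : isFindClose B i (i + d))
    (hlen : j + d ≤ B'.length) (heq : seg B' j (j + d) = seg B i (i + d)) :
    isFindClose B' j (j + d) := by
  obtain ⟨⟨hid, hdl, hcnt⟩, hmin⟩ := hc
  refine ⟨⟨by omega, hlen, heq ▸ hcnt⟩, ?_⟩
  rintro c' ⟨hjc', -, hcnt'⟩
  by_contra! hlt
  have hprefix : seg B' j c' = seg B i (i + (c' - j)) := by
    rw [seg_eq_take_seg B' hlt.le, heq,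
      seg_eq_take_seg B (a := i) (b' := i + (c' - j)) (b := i + d) (by omega)]
    congr 1
    omega
  have := hmin (i + (c' - j)) ⟨by omega, by omega, hprefix ▸ hcnt'⟩
  omega

theorem stmt2_general (B : List Bool) (i c j : ℕ)
    (hi : B[i - 1]? = some true) (hc : isFindClose B i c)
    (hj2 : j + (c - i) ≤ B.length)
    (heq : seg B j (j + (c - i)) = seg B i c) :
    B[j - 1]? = some true ∧ isFindClose B j (j + (c - i)) := by
  obtain ⟨d, rfl⟩ : ∃ d, c = i + d := ⟨c - i, by have := hc.1.1; omega⟩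
  rw [Nat.add_sub_cancel_left] at hj2 heq ⊢
  constructor
  · rw [← seg_getElem?_zero B j (j + d), heq, seg_getElem?_zero, hi]
  · exact isFindClose_of_seg_eq hc hj2 heq

/-- if `B` is balanced, `B[i] = '('`, `c = find_close(B,i)`, and
`j` is a position with `j + (c - i) ≤ |B|` such that `B[j..j+(c-i)] = B[i..c]`,
then `B[j] = '('` and `find_close(B,j) = j + (c - i)`. -/
theorem stmt2 (B : List Bool) (i c j : ℕ)
    (hB : isBalanced B) (h1 : 1 ≤ i) (h2 : i ≤ B.length)
    (hi : B[i - 1]? = some true) (hc : isFindClose B i c)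
    (hj1 : 1 ≤ j) (hj2 : j + (c - i) ≤ B.length)
    (heq : seg B j (j + (c - i)) = seg B i c) :
    B[j - 1]? = some true ∧ isFindClose B j (j + (c - i)) :=
  stmt2_general B i c j hi hc hj2 heq
end

section
/- Let B be a balanced parenthesis sequence, let p and q be positions with B[p] = B[q] = '(', let c = find_close(B,p), and assume q + (c - p) ≤ |B|. Then B[p..c] = B[q..q+(c-p)] if and only if the longest common prefix of the two suffixes B[p..|B|] and B[q..|B|] has length at least c - p + 1; and when this holds, find_close(B,q) = q + (c - p). -/
/-- The length of the longest common prefix of two sequences. -/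
def lcpLen : List Bool → List Bool → ℕ
  | a :: s, b :: t => if a = b then lcpLen s t + 1 else 0
  | _, _ => 0

/-
Whether `c` matches `p` depends only on the segment `B[p..c]`: `find_close` picks its shortest
prefix with as many '(' as ')'. If the segment of the same length starting at `q` is equal to it,
their prefixes have the same counts, so `q + (c - p)` is the first match of `q`. The two segments
are equal exactly when the suffixes from `p` and `q` share a prefix of that length.
-/

theorem take_eq_take_iff_le_lcpLen :
    ∀ (n : ℕ) (s t : List Bool), n ≤ t.length → (s.take n = t.take n ↔ n ≤ lcpLen s t)
  | 0, s, t, _ => by simp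
  | n + 1, [], _ :: _, _ => by simp [lcpLen]
  | _ + 1, _, [], ht => by simp at ht
  | n + 1, a :: s, b :: t, ht => by
    have ih := take_eq_take_iff_le_lcpLen n s t (Nat.succ_le_succ_iff.mp ht)
    by_cases hab : a = b <;> simp [lcpLen, hab, ih]

theorem seg_add (B : List Bool) (i k : ℕ) : seg B i (i + k) = (B.drop (i - 1)).take (k + 1) := by
  simp only [seg, Nat.add_sub_cancel_left]

theorem seg_add_eq_of_le {B : List Bool} {p q k j : ℕ}
    (h : seg B p (p + k) = seg B q (q + k)) (hj : j ≤ k) : seg B p (p + j) = seg B q (q + j) := by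
  have hjk : min (j + 1) (k + 1) = j + 1 := by omega
  rw [seg_add, seg_add] at h ⊢
  rw [← hjk, ← List.take_take, h, List.take_take]

theorem matchAt_add_iff {B : List Bool} {p q k j : ℕ}
    (h : seg B p (p + k) = seg B q (q + k)) (hj : j ≤ k)
    (hp : p + j ≤ B.length) (hq : q + j ≤ B.length) :
    matchAt B p (p + j) ↔ matchAt B q (q + j) := by
  simp only [matchAt, seg_add_eq_of_le h hj, Nat.lt_add_right_iff_pos, hp, hq, true_and]

theorem isFindClose_of_seg_eq_s3 {B : List Bool} {p q k : ℕ} (hc : isFindClose B p (p + k))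
    (hq : q + k ≤ B.length) (h : seg B p (p + k) = seg B q (q + k)) :
    isFindClose B q (q + k) := by
  obtain ⟨hmatch, hmin⟩ := hc
  refine ⟨(matchAt_add_iff h le_rfl hmatch.2.1 hq).mp hmatch, fun c' hc' => ?_⟩
  by_contra! hlt
  obtain ⟨j, rfl⟩ := Nat.exists_eq_add_of_le hc'.1.le
  have hpk := hmatch.2.1
  have := hmin _ ((matchAt_add_iff h (by omega) (by omega) hc'.2.1).mpr hc')
  omega

theorem stmt3_general (B : List Bool) (p q c : ℕ)
    (hq1 : 1 ≤ q)
    (hc : isFindClose B p c)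
    (hlen : q + (c - p) ≤ B.length) :
    (seg B p c = seg B q (q + (c - p)) ↔
      c - p + 1 ≤ lcpLen (B.drop (p - 1)) (B.drop (q - 1))) ∧
    (seg B p c = seg B q (q + (c - p)) → isFindClose B q (q + (c - p))) := by
  obtain ⟨k, rfl⟩ := Nat.exists_eq_add_of_le hc.1.1.le
  rw [Nat.add_sub_cancel_left] at hlen ⊢
  refine ⟨?_, isFindClose_of_seg_eq_s3 hc hlen⟩
  rw [seg_add, seg_add]
  exact take_eq_take_iff_le_lcpLen _ _ _ (by rw [List.length_drop]; omega)

/-- for positions `p`, `q` with `B[p] = B[q] = '('`,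
`c = find_close(B,p)` and `q + (c - p) ≤ |B|`:
`B[p..c] = B[q..q+(c-p)]` iff the longest common prefix of the suffixes
`B[p..|B|]` and `B[q..|B|]` has length at least `c - p + 1`; and when this
holds, `find_close(B,q) = q + (c - p)`. -/
theorem stmt3 (B : List Bool) (p q c : ℕ)
    (hB : isBalanced B) (hp1 : 1 ≤ p) (hp2 : p ≤ B.length)
    (hq1 : 1 ≤ q) (hq2 : q ≤ B.length)
    (hp : B[p - 1]? = some true) (hq : B[q - 1]? = some true)
    (hc : isFindClose B p c)
    (hlen : q + (c - p) ≤ B.length) :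
    (seg B p c = seg B q (q + (c - p)) ↔
      c - p + 1 ≤ lcpLen (B.drop (p - 1)) (B.drop (q - 1))) ∧
    (seg B p c = seg B q (q + (c - p)) → isFindClose B q (q + (c - p))) :=
  stmt3_general B p q c hq1 hc hlen
end

section
/- Let B be a balanced parenthesis sequence, let i be a position with B[i] = '(', let c = find_close(B,i), and let W be any balanced parenthesis sequence. Then the sequence obtained by replacing the segment B[i..c] with W, namely B[1..i-1] ++ W ++ B[c+1..|B|], is again a balanced parenthesis sequence. (In particular, replacing a pruned subtree's parenthesis segment with the pattern '(())' keeps the Compressed Balanced Parenthesis sequence balanced.) -/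
theorem List.forall_take_append_iff {α : Type*} (L₁ L₂ : List α) (P : List α → Prop) :
    (∀ p, P ((L₁ ++ L₂).take p)) ↔ (∀ p, P (L₁.take p)) ∧ ∀ q, P (L₁ ++ L₂.take q) := by
  refine ⟨fun h => ⟨fun p => ?_, fun q => ?_⟩, fun ⟨h₁, h₂⟩ p => ?_⟩
  · rcases le_or_gt p L₁.length with hp | hp
    · simpa [List.take_append, Nat.sub_eq_zero_of_le hp] using h p
    · simpa [List.take_of_length_le hp.le] using h L₁.length
  · simpa only [List.take_length_add_append] using h (L₁.length + q)
  · rcases le_or_gt p L₁.length with hp | hp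
    · simpa [List.take_append, Nat.sub_eq_zero_of_le hp] using h₁ p
    · simpa [List.take_append, List.take_of_length_le hp.le] using h₂ (p - L₁.length)

theorem isBalanced.replace_middle {P S T W : List Bool} (hB : isBalanced (P ++ S ++ T))
    (hS : S.count true = S.count false) (hW : isBalanced W) :
    isBalanced (P ++ W ++ T) := by
  obtain ⟨hB_count, hB_prefix⟩ := hB
  obtain ⟨hW_count, hW_prefix⟩ := hW
  rw [List.append_assoc] at hB_prefix ⊢
  obtain ⟨hP_prefix, hST_prefix⟩ :=
    (List.forall_take_append_iff P (S ++ T) (fun L => L.count false ≤ L.count true)).1 hB_prefix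
  have hP := hP_prefix P.length
  rw [List.take_length] at hP
  refine ⟨by simp only [List.count_append] at hB_count ⊢; omega,
    (List.forall_take_append_iff P (W ++ T) (fun L => L.count false ≤ L.count true)).2
      ⟨hP_prefix, ?_⟩⟩
  refine (List.forall_take_append_iff W T
    (fun L => (P ++ L).count false ≤ (P ++ L).count true)).2 ⟨fun q => ?_, fun q => ?_⟩
  · have := hW_prefix q
    simp only [List.count_append] at hP ⊢
    omega
  · have := hST_prefix (S.length + q)
    rw [List.take_length_add_append] at this
    simp only [List.count_append] at this ⊢
    omega

theorem take_append_seg_append_drop (B : List Bool) {i c : ℕ} (hi : 1 ≤ i) (hic : i ≤ c) :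
    B.take (i - 1) ++ seg B i c ++ B.drop c = B := by
  have hlen : c - i + 1 = c - (i - 1) := by omega
  have hdrop : B.drop c = (B.drop (i - 1)).drop (c - (i - 1)) := by
    rw [List.drop_drop]
    congr 1
    omega
  rw [seg, hlen, List.append_assoc, hdrop, List.take_append_drop, List.take_append_drop]

theorem stmt4_general (B W : List Bool) (i c : ℕ)
    (hB : isBalanced B) (hW : isBalanced W)
    (h1 : 1 ≤ i)
    (hc : isFindClose B i c) :
    isBalanced (B.take (i - 1) ++ W ++ B.drop c) := by
  obtain ⟨⟨hic, -, hS⟩, -⟩ := hc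
  rw [← take_append_seg_append_drop B h1 hic.le] at hB
  exact hB.replace_middle hS hW

/-- if `B` is balanced, `B[i] = '('`, `c = find_close(B,i)`,
and `W` is any balanced parenthesis sequence, then
`B[1..i-1] ++ W ++ B[c+1..|B|]` is again a balanced parenthesis sequence. -/
theorem stmt4 (B W : List Bool) (i c : ℕ)
    (hB : isBalanced B) (hW : isBalanced W)
    (h1 : 1 ≤ i) (h2 : i ≤ B.length)
    (hi : B[i - 1]? = some true) (hc : isFindClose B i c) :
    isBalanced (B.take (i - 1) ++ W ++ B.drop c) :=
  stmt4_general B W i c hB hW h1 hc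
end

section
/- Let T be a finite rooted ordered tree in which every internal node has at least 2 children. Then the string '(())' does not occur as a contiguous factor of the BP encoding E(T). (This is why, in the BP representation of a k²-tree with k² ≥ 4 children per internal node, the special pattern '(())' can unambiguously be used to mark level h−1 internal nodes and pruned subtrees.) -/
/-- A finite rooted ordered tree: a single constructor taking the list of subtrees. -/
inductive OTree where
  | node : List OTree → OTree

/-- The BP encoding: E(node [T₁,…,T_d]) = '(' ++ E(T₁) ++ ⋯ ++ E(T_d) ++ ')',
with `true` = '(' and `false` = ')'. -/
def enc : OTree → List Bool
  | .node ts => true :: ((ts.attach.map fun ⟨t, _⟩ => enc t).flatten ++ [false])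

/-- Every internal node (node with at least one child) has at least 2 children. -/
inductive AllInternalAtLeastTwo : OTree → Prop
  | mk (ts : List OTree) : (ts = [] ∨ 2 ≤ ts.length) →
      (∀ t ∈ ts, AllInternalAtLeastTwo t) → AllInternalAtLeastTwo (.node ts)

/-!
An occurrence of `(())` cannot straddle two consecutive encodings, since each ends with `)` and
the next begins with `(`, while `(())` contains no `)(`. So it never arises from concatenating
the children's encodings, and closing a node only appends `)`; the real work is at the opening
`(`, which is followed by `())` only when the first child is a leaf and the only one. To let the
induction pass through the closing brackets, the invariant is that `(())` stays absent when any
number of `)` is appended.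
-/

namespace List

theorem not_infix_append_of_getLast?_of_head? {α : Type*} {l a b : List α} {x y : α}
    (ha : ¬ l <:+: a) (hb : ¬ l <:+: b) (hx : a.getLast? = some x) (hy : b.head? = some y)
    (hxy : ¬ [x, y] <:+: l) : ¬ l <:+: a ++ b := by
  rw [infix_append_iff_ne_nil]
  rintro (h | h | ⟨u, v, hu, hv, rfl, ⟨s, rfl⟩, ⟨t, rfl⟩⟩)
  · exact ha h
  · exact hb h
  · rw [getLast?_append_of_ne_nil s hu, getLast?_eq_some_iff] at hx
    rw [head?_append_of_ne_nil v hv, head?_eq_some_iff] at hy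
    obtain ⟨u', rfl⟩ := hx
    obtain ⟨v', rfl⟩ := hy
    exact hxy ⟨u', v', by simp⟩

end List

open List

namespace OTree

theorem enc_node (ts : List OTree) :
    enc (node ts) = true :: ((ts.map enc).flatten ++ [false]) := by
  rw [enc]
  congr 2
  simp

theorem enc_eq_leaf_or (T : OTree) :
    enc T = [true, false] ∨ ∃ m, enc T = true :: true :: m := by
  obtain ⟨_ | ⟨⟨ds⟩, cs⟩⟩ := T <;> simp [enc_node]

theorem head?_enc (T : OTree) : (enc T).head? = some true := by
  obtain ⟨ts⟩ := T
  simp [enc_node]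

theorem getLast?_enc (T : OTree) : (enc T).getLast? = some false := by
  obtain ⟨ts⟩ := T
  simp [enc_node, getLast?_cons]

theorem head?_flatten_map_enc {ts : List OTree} (h : ts ≠ []) :
    (ts.map enc).flatten.head? = some true := by
  obtain ⟨c, cs, rfl⟩ := exists_cons_of_ne_nil h
  simp [head?_append, head?_enc]

/-- The first two children contribute `((` or `()(`. -/
theorem not_prefix_flatten_map_enc {ts : List OTree} (h : 2 ≤ ts.length) (l : List Bool) :
    ¬ [true, false, false] <+: (ts.map enc).flatten ++ l := by
  match ts, h with
  | c₁ :: c₂ :: cs, _ =>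
    obtain ⟨m₂, hm₂⟩ := head?_eq_some_iff.mp (head?_enc c₂)
    rcases enc_eq_leaf_or c₁ with h₁ | ⟨m₁, h₁⟩ <;> simp [h₁, hm₂]


abbrev wrappedLeaf : List Bool := [true, true, false, false]

def AvoidsWrappedLeafAfterClosing (l : List Bool) : Prop :=
  ∀ n, ¬ wrappedLeaf <:+: l ++ replicate n false

theorem avoidsWrappedLeafAfterClosing_nil : AvoidsWrappedLeafAfterClosing [] := by
  intro n h
  simpa [count_replicate] using h.count_le true

theorem AvoidsWrappedLeafAfterClosing.append {a b : List Bool}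
    (ha : AvoidsWrappedLeafAfterClosing a) (hb : AvoidsWrappedLeafAfterClosing b)
    (hx : a.getLast? = some false) (hy : b.head? = some true) :
    AvoidsWrappedLeafAfterClosing (a ++ b) := by
  intro n
  rw [append_assoc]
  refine not_infix_append_of_getLast?_of_head? (by simpa using ha 0) (hb n) hx
    (y := true) (by simp [head?_append, hy]) (by decide)

theorem avoidsWrappedLeafAfterClosing_flatten_map_enc {ts : List OTree}
    (h : ∀ c ∈ ts, AvoidsWrappedLeafAfterClosing (enc c)) :
    AvoidsWrappedLeafAfterClosing (ts.map enc).flatten := by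
  induction ts with
  | nil => exact avoidsWrappedLeafAfterClosing_nil
  | cons c cs ih =>
    rcases eq_or_ne cs [] with rfl | hcs
    · simpa using h c mem_cons_self
    · exact (h c mem_cons_self).append (ih fun d hd => h d (mem_cons_of_mem c hd))
        (getLast?_enc c) (head?_flatten_map_enc hcs)

theorem avoidsWrappedLeafAfterClosing_enc_node {ts : List OTree} (hts : ts = [] ∨ 2 ≤ ts.length)
    (h : ∀ c ∈ ts, AvoidsWrappedLeafAfterClosing (enc c)) :
    AvoidsWrappedLeafAfterClosing (enc (node ts)) := by
  intro n hn
  have hclose : enc (node ts) ++ replicate n false =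
      true :: ((ts.map enc).flatten ++ replicate (n + 1) false) := by
    rw [enc_node, replicate_succ]
    simp
  rw [hclose, infix_cons_iff] at hn
  rcases hn with hopen | hinner
  · have hopen' : [true, false, false] <+: (ts.map enc).flatten ++ replicate (n + 1) false :=
      (cons_prefix_cons.mp hopen).2
    rcases hts with rfl | hts
    · simp [replicate_succ] at hopen'
    · exact not_prefix_flatten_map_enc hts _ hopen'
  · exact avoidsWrappedLeafAfterClosing_flatten_map_enc h (n + 1) hinner

theorem avoidsWrappedLeafAfterClosing_enc {T : OTree} (h : AllInternalAtLeastTwo T) :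
    AvoidsWrappedLeafAfterClosing (enc T) := by
  induction h with
  | mk ts hts _ ih => exact avoidsWrappedLeafAfterClosing_enc_node hts ih

end OTree

/-- if every internal node of `T` has at least 2 children, then the
string '(())' (i.e. `[true, true, false, false]`) does not occur as a contiguous
factor of the BP encoding `E(T)`. -/
theorem stmt7 (T : OTree) (h : AllInternalAtLeastTwo T) :
    ¬ [true, true, false, false] <:+: enc T := by
  simpa using OTree.avoidsWrappedLeafAfterClosing_enc h 0
end
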